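/- arXiv:2506.17874 — 2 statements merged into one kernel-verified Lean document; each statement's English description precedes it below -/
import Mathlib

section
/- Let g : ℝ^d → ℝ be continuously differentiable with gradient norm bounded by G and Hessian operator norm bounded by H. Then for any x and ρ ≥ 0, | sup_{‖δ‖₂ ≤ ρ} g(x + δ) − ( g(x) + ρ‖∇g(x)‖₂ ) | ≤ (H/2)·ρ². -/
/-!
The Hessian bound gives the Taylor estimate `|g (x + δ) - g x - ⟪∇g x, δ⟫| ≤ H ‖δ‖² / 2`.
On the ball of radius `ρ` the linear term is at most `ρ ‖∇g x‖` by Cauchy–Schwarz, with equality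
at `δ = (ρ / ‖∇g x‖) • ∇g x`, so the supremum lies between `g x + ρ ‖∇g x‖ ∓ H ρ² / 2`.
-/

open Set

section Taylor

variable {E F : Type*} [NormedAddCommGroup E] [NormedSpace ℝ E]
  [NormedAddCommGroup F] [NormedSpace ℝ F]

theorem norm_fderiv_sub_le_of_norm_fderiv_fderiv_le {f : E → F} {H : ℝ}
    (hf' : Differentiable ℝ (fderiv ℝ f)) (hH : ∀ y, ‖fderiv ℝ (fderiv ℝ f) y‖ ≤ H)
    (x y : E) : ‖fderiv ℝ f y - fderiv ℝ f x‖ ≤ H * ‖y - x‖ :=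
  convex_univ.norm_image_sub_le_of_norm_fderiv_le (fun z _ => hf' z) (fun z _ => hH z)
    (mem_univ x) (mem_univ y)

/-- Fence `t ↦ f (x + t • δ) - f x - t • f' x δ` by `H t² ‖δ‖² / 2` on `[0, 1]`. -/
theorem norm_sub_sub_fderiv_le_of_norm_fderiv_fderiv_le {f : E → F} {H : ℝ}
    (hf : Differentiable ℝ f) (hf' : Differentiable ℝ (fderiv ℝ f))
    (hH : ∀ y, ‖fderiv ℝ (fderiv ℝ f) y‖ ≤ H) (x δ : E) :
    ‖f (x + δ) - f x - fderiv ℝ f x δ‖ ≤ H / 2 * ‖δ‖ ^ 2 := by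
  set φ : ℝ → F := fun t => f (x + t • δ) - f x - t • fderiv ℝ f x δ
  have hline : ∀ t : ℝ, HasDerivAt (fun t : ℝ => x + t • δ) δ t := fun t => by
    simpa using ((hasDerivAt_id t).smul_const δ).const_add x
  have hφ : ∀ t : ℝ, HasDerivAt φ (fderiv ℝ f (x + t • δ) δ - fderiv ℝ f x δ) t := fun t =>
    ((((hf _).hasFDerivAt.comp_hasDerivAt t (hline t)).sub_const (f x)).sub
      ((hasDerivAt_id t).smul_const (fderiv ℝ f x δ))).congr_deriv (by rw [one_smul])
  have hB : ∀ t : ℝ, HasDerivAt (fun t => H / 2 * ‖δ‖ ^ 2 * t ^ 2) (H * ‖δ‖ ^ 2 * t) t :=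
    fun t =>
      ((hasDerivAt_pow 2 t).const_mul (H / 2 * ‖δ‖ ^ 2)).congr_deriv (by norm_num; ring)
  have hbound : ∀ t ∈ Ico (0 : ℝ) 1,
      ‖fderiv ℝ f (x + t • δ) δ - fderiv ℝ f x δ‖ ≤ H * ‖δ‖ ^ 2 * t := by
    rintro t ⟨ht, -⟩
    calc ‖fderiv ℝ f (x + t • δ) δ - fderiv ℝ f x δ‖
        = ‖(fderiv ℝ f (x + t • δ) - fderiv ℝ f x) δ‖ := rfl
      _ ≤ ‖fderiv ℝ f (x + t • δ) - fderiv ℝ f x‖ * ‖δ‖ := ContinuousLinearMap.le_opNorm _ _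
      _ ≤ H * ‖x + t • δ - x‖ * ‖δ‖ := by
          gcongr; exact norm_fderiv_sub_le_of_norm_fderiv_fderiv_le hf' hH x _
      _ = H * ‖δ‖ ^ 2 * t := by
          rw [add_sub_cancel_left, norm_smul, Real.norm_of_nonneg ht]; ring
  have := image_norm_le_of_norm_deriv_right_le_deriv_boundary
    (fun t _ => (hφ t).continuousAt.continuousWithinAt) (fun t _ => (hφ t).hasDerivWithinAt)
    (by simp [φ]) hB hbound (right_mem_Icc.2 zero_le_one)
  simpa [φ] using this

end Taylor

theorem exists_norm_le_inner_eq_mul_norm {E : Type*} [NormedAddCommGroup E]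
    [InnerProductSpace ℝ E] (v : E) {ρ : ℝ} (hρ : 0 ≤ ρ) :
    ∃ δ : E, ‖δ‖ ≤ ρ ∧ inner ℝ v δ = ρ * ‖v‖ := by
  rcases eq_or_ne v 0 with rfl | hv
  · exact ⟨0, by simpa using hρ, by simp⟩
  · have hv' : ‖v‖ ≠ 0 := norm_ne_zero_iff.2 hv
    refine ⟨(ρ / ‖v‖) • v, ?_, ?_⟩
    · rw [norm_smul, Real.norm_of_nonneg (by positivity), div_mul_cancel₀ _ hv']
    · rw [real_inner_smul_right, real_inner_self_eq_norm_sq]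
      field_simp

theorem abs_csSup_image_sub_le {α : Type*} {s : Set α} {f : α → ℝ} {a ε : ℝ}
    (hub : ∀ y ∈ s, f y ≤ a + ε) (hlb : ∃ y ∈ s, a - ε ≤ f y) :
    |sSup (f '' s) - a| ≤ ε := by
  obtain ⟨y₀, hy₀, hay₀⟩ := hlb
  have hbdd : BddAbove (f '' s) := ⟨a + ε, forall_mem_image.2 hub⟩
  have hle : sSup (f '' s) ≤ a + ε :=
    csSup_le ⟨_, mem_image_of_mem f hy₀⟩ (forall_mem_image.2 hub)
  have hge : f y₀ ≤ sSup (f '' s) := le_csSup hbdd (mem_image_of_mem f hy₀)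
  rw [abs_le]
  constructor <;> linarith

section Gradient

variable {E : Type*} [NormedAddCommGroup E] [InnerProductSpace ℝ E] [CompleteSpace E]
  {f : E → ℝ} {H : ℝ}

theorem le_add_mul_norm_gradient_add_of_norm_le
    (hf : Differentiable ℝ f) (hf' : Differentiable ℝ (fderiv ℝ f))
    (hH : ∀ y, ‖fderiv ℝ (fderiv ℝ f) y‖ ≤ H) (x : E) {δ : E} {ρ : ℝ} (hδ : ‖δ‖ ≤ ρ) :
    f (x + δ) ≤ f x + ρ * ‖gradient f x‖ + H / 2 * ρ ^ 2 := by
  have hH₀ : 0 ≤ H := (ContinuousLinearMap.opNorm_nonneg _).trans (hH x)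
  have htaylor := (abs_le.1 (norm_sub_sub_fderiv_le_of_norm_fderiv_fderiv_le hf hf' hH x δ)).2
  have hlin : fderiv ℝ f x δ ≤ ρ * ‖gradient f x‖ := by
    rw [← inner_gradient_left]
    calc inner ℝ (gradient f x) δ ≤ ‖gradient f x‖ * ‖δ‖ := real_inner_le_norm _ _
      _ ≤ ρ * ‖gradient f x‖ := by rw [mul_comm]; gcongr
  have hquad : H / 2 * ‖δ‖ ^ 2 ≤ H / 2 * ρ ^ 2 := by gcongr
  linarith

theorem exists_norm_le_sub_le_add
    (hf : Differentiable ℝ f) (hf' : Differentiable ℝ (fderiv ℝ f))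
    (hH : ∀ y, ‖fderiv ℝ (fderiv ℝ f) y‖ ≤ H) (x : E) {ρ : ℝ} (hρ : 0 ≤ ρ) :
    ∃ δ : E, ‖δ‖ ≤ ρ ∧ f x + ρ * ‖gradient f x‖ - H / 2 * ρ ^ 2 ≤ f (x + δ) := by
  have hH₀ : 0 ≤ H := (ContinuousLinearMap.opNorm_nonneg _).trans (hH x)
  obtain ⟨δ, hδ, hinner⟩ := exists_norm_le_inner_eq_mul_norm (gradient f x) hρ
  have htaylor := (abs_le.1 (norm_sub_sub_fderiv_le_of_norm_fderiv_fderiv_le hf hf' hH x δ)).1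
  rw [← inner_gradient_left, hinner] at htaylor
  have hquad : H / 2 * ‖δ‖ ^ 2 ≤ H / 2 * ρ ^ 2 := by gcongr
  exact ⟨δ, hδ, by linarith⟩

end Gradient

theorem stmt_4_general {d : ℕ} (g : EuclideanSpace ℝ (Fin d) → ℝ) (H : ℝ)
    (hC2 : ContDiff ℝ 2 g)
    (hH : ∀ x, ‖fderiv ℝ (fderiv ℝ g) x‖ ≤ H)
    (x : EuclideanSpace ℝ (Fin d)) (ρ : ℝ) (hρ : 0 ≤ ρ) :
    |sSup ((fun δ => g (x + δ)) '' Metric.closedBall 0 ρ) -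
      (g x + ρ * ‖gradient g x‖)| ≤ (H / 2) * ρ ^ 2 := by
  have hg : Differentiable ℝ g := hC2.differentiable (by norm_num)
  have hg' : Differentiable ℝ (fderiv ℝ g) :=
    (hC2.fderiv_right (m := 1) (by norm_num)).differentiable (by norm_num)
  refine abs_csSup_image_sub_le (fun δ hδ => ?_) ?_
  · rw [mem_closedBall_zero_iff] at hδ
    exact le_add_mul_norm_gradient_add_of_norm_le hg hg' hH x hδ
  · obtain ⟨δ, hδ, hle⟩ := exists_norm_le_sub_le_add hg hg' hH x hρ
    exact ⟨δ, mem_closedBall_zero_iff.2 hδ, hle⟩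

/-- For g C² with ‖∇g‖ ≤ G and ‖∇²g‖_op ≤ H everywhere,
| sup_{‖δ‖≤ρ} g(x+δ) − (g(x) + ρ‖∇g(x)‖) | ≤ (H/2)ρ². -/
theorem stmt_4 {d : ℕ} (g : EuclideanSpace ℝ (Fin d) → ℝ) (G H : ℝ)
    (hC2 : ContDiff ℝ 2 g)
    (hG : ∀ x, ‖gradient g x‖ ≤ G)
    (hH : ∀ x, ‖fderiv ℝ (fderiv ℝ g) x‖ ≤ H)
    (x : EuclideanSpace ℝ (Fin d)) (ρ : ℝ) (hρ : 0 ≤ ρ) :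
    |sSup ((fun δ => g (x + δ)) '' Metric.closedBall 0 ρ) -
      (g x + ρ * ‖gradient g x‖)| ≤ (H / 2) * ρ ^ 2 :=
  stmt_4_general g H hC2 hH x ρ hρ
end

section
/- Let g₁,…,gₙ : ℝ^d → ℝ be functions each with gradient norm bounded by G and Hessian operator norm bounded by H (in C²). Define D = (1/n)Σᵢ sup_{‖δ‖₂≤ρ} gᵢ(xᵢ + δ) and R = (1/n)Σᵢ gᵢ(xᵢ) + ρ·(1/n)Σᵢ ‖∇gᵢ(xᵢ)‖₂. Then |D − R| ≤ (H/2)·ρ². -/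
/-!
By Taylor's formula with an `H`-Lipschitz derivative, `gᵢ (xᵢ + δ)` differs from its
linearization `gᵢ xᵢ + ⟪∇gᵢ xᵢ, δ⟫` by at most `(H / 2) ‖δ‖² ≤ (H / 2) ρ²` on the ball of radius `ρ`.
The supremum of the linear part over that ball is `ρ ‖∇gᵢ xᵢ‖` (Cauchy–Schwarz, attained at
`δ = (ρ / ‖∇gᵢ xᵢ‖) • ∇gᵢ xᵢ`), so each adversarial supremum is within `(H / 2) ρ²` of
`gᵢ xᵢ + ρ ‖∇gᵢ xᵢ‖`, and averaging over `i` preserves the bound.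
-/

open Set Metric
open scoped RealInnerProductSpace

section Taylor

variable {E F : Type*} [NormedAddCommGroup E] [NormedSpace ℝ E]
  [NormedAddCommGroup F] [NormedSpace ℝ F]

theorem norm_image_add_sub_sub_fderiv_le_of_lipschitz {g : E → F} (hg : Differentiable ℝ g)
    {H : ℝ} (hlip : ∀ y z, ‖fderiv ℝ g y - fderiv ℝ g z‖ ≤ H * ‖y - z‖) (a δ : E) :
    ‖g (a + δ) - g a - fderiv ℝ g a δ‖ ≤ H / 2 * ‖δ‖ ^ 2 := by
  set f : ℝ → F := fun t => g (a + t • δ) - g a - t • fderiv ℝ g a δ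
  set f' : ℝ → F := fun t => fderiv ℝ g (a + t • δ) δ - fderiv ℝ g a δ
  have hf : ∀ t, HasDerivAt f (f' t) t := by
    intro t
    have hline : HasDerivAt (fun s : ℝ => a + s • δ) δ t := by
      simpa using ((hasDerivAt_id t).smul_const δ).const_add a
    have hgt := (hg (a + t • δ)).hasFDerivAt.comp_hasDerivAt t hline
    exact (hgt.sub_const (g a)).sub (by simpa using (hasDerivAt_id t).smul_const (fderiv ℝ g a δ))
  have hB : ∀ t, HasDerivAt (fun t : ℝ => H / 2 * ‖δ‖ ^ 2 * t ^ 2) (H * ‖δ‖ ^ 2 * t) t :=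
    fun t => ((hasDerivAt_pow 2 t).const_mul _).congr_deriv (by push_cast; ring)
  have bound : ∀ t ∈ Ico (0 : ℝ) 1, ‖f' t‖ ≤ H * ‖δ‖ ^ 2 * t := by
    rintro t ⟨ht, -⟩
    calc ‖f' t‖ = ‖(fderiv ℝ g (a + t • δ) - fderiv ℝ g a) δ‖ := rfl
      _ ≤ ‖fderiv ℝ g (a + t • δ) - fderiv ℝ g a‖ * ‖δ‖ := ContinuousLinearMap.le_opNorm _ _
      _ ≤ H * ‖a + t • δ - a‖ * ‖δ‖ := by gcongr; exact hlip _ _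
      _ = H * ‖δ‖ ^ 2 * t := by
        rw [add_sub_cancel_left, norm_smul, Real.norm_of_nonneg ht]; ring
  have := image_norm_le_of_norm_deriv_right_le_deriv_boundary
    (fun t _ => (hf t).continuousAt.continuousWithinAt) (fun t _ => (hf t).hasDerivWithinAt)
    (by simp [f]) hB bound (right_mem_Icc.2 zero_le_one)
  simpa [f] using this

theorem ContDiff.norm_image_add_sub_sub_fderiv_le {g : E → F} (hg : ContDiff ℝ 2 g) {H : ℝ}
    (hH : ∀ y, ‖fderiv ℝ (fderiv ℝ g) y‖ ≤ H) (a δ : E) :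
    ‖g (a + δ) - g a - fderiv ℝ g a δ‖ ≤ H / 2 * ‖δ‖ ^ 2 := by
  refine norm_image_add_sub_sub_fderiv_le_of_lipschitz (hg.differentiable two_ne_zero)
    (fun y z => ?_) a δ
  exact convex_univ.norm_image_sub_le_of_norm_fderiv_le
    (fun y _ => ((hg.fderiv_right (m := 1) le_rfl).differentiable one_ne_zero) y)
    (fun y _ => hH y) (mem_univ z) (mem_univ y)

end Taylor

section InnerProductSpace

variable {E : Type*} [NormedAddCommGroup E] [InnerProductSpace ℝ E]

theorem exists_mem_closedBall_inner_eq (v : E) {ρ : ℝ} (hρ : 0 ≤ ρ) :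
    ∃ δ ∈ closedBall (0 : E) ρ, ⟪v, δ⟫ = ρ * ‖v‖ := by
  rcases eq_or_ne v 0 with rfl | hv
  · exact ⟨0, mem_closedBall_self hρ, by simp⟩
  · have hv' : 0 < ‖v‖ := norm_pos_iff.2 hv
    refine ⟨(ρ / ‖v‖) • v, ?_, ?_⟩
    · rw [mem_closedBall_zero_iff, norm_smul, Real.norm_of_nonneg (by positivity),
        div_mul_cancel₀ _ hv'.ne']
    · rw [real_inner_smul_right, real_inner_self_eq_norm_sq]
      field_simp

theorem abs_sSup_image_closedBall_sub_le {g : E → ℝ} {a v : E} {ρ ε : ℝ} (hρ : 0 ≤ ρ)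
    (hg : ∀ δ ∈ closedBall (0 : E) ρ, |g (a + δ) - g a - ⟪v, δ⟫| ≤ ε) :
    |sSup ((fun δ => g (a + δ)) '' closedBall 0 ρ) - (g a + ρ * ‖v‖)| ≤ ε := by
  set S := (fun δ => g (a + δ)) '' closedBall (0 : E) ρ
  have hub : ∀ y ∈ S, y ≤ g a + ρ * ‖v‖ + ε := by
    rintro _ ⟨δ, hδ, rfl⟩
    have hinner : ⟪v, δ⟫ ≤ ρ * ‖v‖ := by
      calc ⟪v, δ⟫ ≤ ‖v‖ * ‖δ‖ := real_inner_le_norm v δ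
        _ ≤ ‖v‖ * ρ := by gcongr; exact mem_closedBall_zero_iff.1 hδ
        _ = ρ * ‖v‖ := mul_comm _ _
    linarith [(abs_le.1 (hg δ hδ)).2]
  obtain ⟨δ₀, hδ₀, hinner⟩ := exists_mem_closedBall_inner_eq v hρ
  have hlow : g (a + δ₀) ≤ sSup S := le_csSup ⟨_, hub⟩ (mem_image_of_mem _ hδ₀)
  have hup : sSup S ≤ g a + ρ * ‖v‖ + ε := csSup_le ⟨_, mem_image_of_mem _ hδ₀⟩ hub
  rw [abs_le]
  constructor <;> linarith [(abs_le.1 (hg δ₀ hδ₀)).1]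

end InnerProductSpace

theorem abs_mean_sub_mean_le {n : ℕ} (hn : 0 < n) (f g : Fin n → ℝ) {ε : ℝ}
    (h : ∀ i, |f i - g i| ≤ ε) :
    |(1 / n : ℝ) * ∑ i, f i - (1 / n : ℝ) * ∑ i, g i| ≤ ε := by
  have hn' : (0 : ℝ) < n := Nat.cast_pos.2 hn
  rw [← mul_sub, ← Finset.sum_sub_distrib, abs_mul, abs_of_pos (by positivity), one_div,
    inv_mul_le_iff₀ hn']
  calc |∑ i, (f i - g i)| ≤ ∑ i, |f i - g i| := Finset.abs_sum_le_sum_abs _ _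
    _ ≤ ∑ _i : Fin n, ε := Finset.sum_le_sum fun i _ => h i
    _ = n * ε := by simp

theorem stmt_6_general {d : ℕ} (n : ℕ) (hn : 0 < n)
    (g : Fin n → EuclideanSpace ℝ (Fin d) → ℝ)
    (x : Fin n → EuclideanSpace ℝ (Fin d)) (H ρ : ℝ) (hρ : 0 ≤ ρ)
    (hC2 : ∀ i, ContDiff ℝ 2 (g i))
    (hH : ∀ i x', ‖fderiv ℝ (fderiv ℝ (g i)) x'‖ ≤ H) :
    |(1 / n : ℝ) * ∑ i : Fin n,
        sSup ((fun δ => g i (x i + δ)) '' Metric.closedBall 0 ρ) -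
      ((1 / n : ℝ) * ∑ i : Fin n, g i (x i) +
        ρ * ((1 / n : ℝ) * ∑ i : Fin n, ‖gradient (g i) (x i)‖))| ≤
    (H / 2) * ρ ^ 2 := by
  have hR : (1 / n : ℝ) * ∑ i, g i (x i) + ρ * ((1 / n : ℝ) * ∑ i, ‖gradient (g i) (x i)‖) =
      (1 / n : ℝ) * ∑ i, (g i (x i) + ρ * ‖gradient (g i) (x i)‖) := by
    rw [Finset.sum_add_distrib, ← Finset.mul_sum]; ring
  rw [hR]
  refine abs_mean_sub_mean_le hn _ _ fun i => abs_sSup_image_closedBall_sub_le hρ fun δ hδ => ?_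
  have hH0 : 0 ≤ H := (norm_nonneg (fderiv ℝ (fderiv ℝ (g i)) 0)).trans (hH i 0)
  rw [inner_gradient_left, ← Real.norm_eq_abs]
  calc _ ≤ H / 2 * ‖δ‖ ^ 2 := (hC2 i).norm_image_add_sub_sub_fderiv_le (hH i) (x i) δ
    _ ≤ H / 2 * ρ ^ 2 := by gcongr; exact mem_closedBall_zero_iff.1 hδ

/-- For g₁,…,gₙ C² with uniform gradient bound G and Hessian operator
norm bound H, the gap between the averaged adversarial suprema
D = (1/n)Σᵢ sup_{‖δ‖≤ρ} gᵢ(xᵢ+δ) and the variation-regularized quantity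
R = (1/n)Σᵢ gᵢ(xᵢ) + ρ·(1/n)Σᵢ ‖∇gᵢ(xᵢ)‖ satisfies |D − R| ≤ (H/2)ρ². -/
theorem stmt_6 {d : ℕ} (n : ℕ) (hn : 0 < n)
    (g : Fin n → EuclideanSpace ℝ (Fin d) → ℝ)
    (x : Fin n → EuclideanSpace ℝ (Fin d)) (G H ρ : ℝ) (hρ : 0 ≤ ρ)
    (hC2 : ∀ i, ContDiff ℝ 2 (g i))
    (hG : ∀ i x', ‖gradient (g i) x'‖ ≤ G)
    (hH : ∀ i x', ‖fderiv ℝ (fderiv ℝ (g i)) x'‖ ≤ H) :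
    |(1 / n : ℝ) * ∑ i : Fin n,
        sSup ((fun δ => g i (x i + δ)) '' Metric.closedBall 0 ρ) -
      ((1 / n : ℝ) * ∑ i : Fin n, g i (x i) +
        ρ * ((1 / n : ℝ) * ∑ i : Fin n, ‖gradient (g i) (x i)‖))| ≤
    (H / 2) * ρ ^ 2 :=
  stmt_6_general n hn g x H ρ hρ hC2 hH
end
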